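/- Let (L,[-,-],Δ,α) be a Hom-Lie bialgebra and t ∈ L⊗L with (α⊗α)(t) = t, τ(t) = −t, and (α⊗α⊗α)(ad_x([[t,t]]^α + ↻(α⊗Δ)(t))) = 0 for all x ∈ L, where ↻ denotes the cyclic sum over the three tensor factors. Then (L, [-,-], Δ_t = Δ + ad(t), α) is a Hom-Lie bialgebra. -/

import Mathlib

/-!
Write `δ = ad(t)`. Since `ad_x` commutes with `τ`, intertwines `α ⊗ α` with `ad_{α x}`, and
satisfies `ad_{[x,y]} (α ⊗ α) = ad_{α x} ad_y - ad_{α y} ad_x` (Hom-Jacobi), the invariance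
`(α ⊗ α) t = t` and antisymmetry of `t` give multiplicativity, antisymmetry and the compatibility
condition for `Δ + δ` directly from those of `Δ`.

For the co-Jacobi identity, `↻ (α ⊗ (Δ + δ)) (Δ + δ) z` splits into four pieces. The `Δ Δ` piece
vanishes. By the compatibility of `Δ`, the `Δ δ` piece is `ad_{α z} ↻ (α ⊗ Δ) t` minus a
correction term, which the `δ Δ` piece cancels because `Δ z` and `t` are antisymmetric. By
Hom-Jacobi the `δ δ` piece is `ad_{α z} [[t,t]]^α`. So the sum is `ad_{α z} X` with
`X = [[t,t]]^α + ↻ (α ⊗ Δ) t`, and `X` is `α`-invariant, so the hypothesis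
`α^{⊗3} (ad_z X) = ad_{α z} (α^{⊗3} X) = 0` is exactly its vanishing.
-/

open TensorProduct

variable {k : Type*} [Field k]
variable {L : Type*} [AddCommGroup L] [Module k L]

/-- `[r₁₂, s₁₃]` -/
noncomputable def c1213 (β : L →ₗ[k] L →ₗ[k] L) (α : L →ₗ[k] L) :
    (L ⊗[k] L) ⊗[k] (L ⊗[k] L) →ₗ[k] L ⊗[k] (L ⊗[k] L) :=
  (TensorProduct.map (TensorProduct.lift β) (TensorProduct.map α α)) ∘ₗ
    (TensorProduct.tensorTensorTensorComm k L L L L).toLinearMap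

/-- `[r₁₂, s₂₃]` -/
noncomputable def c1223 (β : L →ₗ[k] L →ₗ[k] L) (α : L →ₗ[k] L) :
    (L ⊗[k] L) ⊗[k] (L ⊗[k] L) →ₗ[k] L ⊗[k] (L ⊗[k] L) :=
  (TensorProduct.map α ((TensorProduct.map (TensorProduct.lift β) α) ∘ₗ
      (TensorProduct.assoc k L L L).symm.toLinearMap)) ∘ₗ
    (TensorProduct.assoc k L L (L ⊗[k] L)).toLinearMap

/-- `[r₁₃, s₂₃]` -/
noncomputable def c1323 (β : L →ₗ[k] L →ₗ[k] L) (α : L →ₗ[k] L) :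
    (L ⊗[k] L) ⊗[k] (L ⊗[k] L) →ₗ[k] L ⊗[k] (L ⊗[k] L) :=
  (TensorProduct.assoc k L L L).toLinearMap ∘ₗ
    (TensorProduct.map (TensorProduct.map α α) (TensorProduct.lift β)) ∘ₗ
    (TensorProduct.tensorTensorTensorComm k L L L L).toLinearMap

/-- `[[r,s]]^α = [r₁₂,s₁₃] + [r₁₂,s₂₃] + [r₁₃,s₂₃]` -/
noncomputable def chybe (β : L →ₗ[k] L →ₗ[k] L) (α : L →ₗ[k] L) (r s : L ⊗[k] L) :
    L ⊗[k] (L ⊗[k] L) :=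
  c1213 β α (r ⊗ₜ s) + c1223 β α (r ⊗ₜ s) + c1323 β α (r ⊗ₜ s)

/-- `ad_x` on `L ⊗ L`. -/
noncomputable def adT2 (β : L →ₗ[k] L →ₗ[k] L) (α : L →ₗ[k] L) (x : L) :
    L ⊗[k] L →ₗ[k] L ⊗[k] L :=
  TensorProduct.map (β x) α + TensorProduct.map α (β x)

/-- `ad_x` on `L ⊗ L ⊗ L`. -/
noncomputable def adT3 (β : L →ₗ[k] L →ₗ[k] L) (α : L →ₗ[k] L) (x : L) :
    L ⊗[k] (L ⊗[k] L) →ₗ[k] L ⊗[k] (L ⊗[k] L) :=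
  TensorProduct.map (β x) (TensorProduct.map α α) +
    TensorProduct.map α (TensorProduct.map (β x) α) +
    TensorProduct.map α (TensorProduct.map α (β x))

/-- the cyclic permutation on `L ⊗ L ⊗ L`, `x⊗y⊗z ↦ z⊗x⊗y`. -/
noncomputable def cyc : L ⊗[k] (L ⊗[k] L) →ₗ[k] L ⊗[k] (L ⊗[k] L) :=
  (TensorProduct.comm k (L ⊗[k] L) L).toLinearMap ∘ₗ
    (TensorProduct.assoc k L L L).symm.toLinearMap

/-- the cyclic sum `↻` on `L ⊗ L ⊗ L`. -/
noncomputable def cycSum : L ⊗[k] (L ⊗[k] L) →ₗ[k] L ⊗[k] (L ⊗[k] L) :=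
  LinearMap.id + cyc + cyc ∘ₗ cyc

/-- `Δ = ad(r) : x ↦ ad_x(r)` as a linear map. -/
noncomputable def adr (β : L →ₗ[k] L →ₗ[k] L) (α : L →ₗ[k] L) (r : L ⊗[k] L) :
    L →ₗ[k] L ⊗[k] L where
  toFun x := adT2 β α x r
  map_add' x y := by
    simp only [adT2, map_add, TensorProduct.map_add_left, TensorProduct.map_add_right,
      LinearMap.add_apply]
    abel
  map_smul' c x := by
    simp only [adT2, map_smul, TensorProduct.map_smul_left, TensorProduct.map_smul_right,
      LinearMap.add_apply, LinearMap.smul_apply, RingHom.id_apply, smul_add]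

/-- Hom-Lie algebra axioms. -/
def IsHomLie (β : L →ₗ[k] L →ₗ[k] L) (α : L →ₗ[k] L) : Prop :=
  (∀ x y, β x y = - β y x) ∧
  (∀ x y, α (β x y) = β (α x) (α y)) ∧
  (∀ x y z, β (β x y) (α z) + β (β z x) (α y) + β (β y z) (α x) = 0)

/-- Hom-Lie coalgebra axioms. -/
def IsHomLieCoalg (Δ : L →ₗ[k] L ⊗[k] L) (α : L →ₗ[k] L) : Prop :=
  (∀ x, Δ (α x) = TensorProduct.map α α (Δ x)) ∧
  (∀ x, TensorProduct.comm k L L (Δ x) = - Δ x) ∧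
  (∀ x, cycSum (TensorProduct.map α Δ (Δ x)) = 0)

/-- Hom-Lie bialgebra axioms. -/
def IsHomLieBialg (β : L →ₗ[k] L →ₗ[k] L) (Δ : L →ₗ[k] L ⊗[k] L) (α : L →ₗ[k] L) : Prop :=
  IsHomLie β α ∧ IsHomLieCoalg Δ α ∧
  (∀ x y, Δ (β x y) = adT2 β α (α x) (Δ y) - adT2 β α (α y) (Δ x))

lemma TensorProduct.map_neg_right {R M N P Q : Type*} [CommRing R] [AddCommGroup M]
    [AddCommGroup N] [AddCommGroup P] [AddCommGroup Q] [Module R M] [Module R N] [Module R P]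
    [Module R Q] (f : M →ₗ[R] P) (g : N →ₗ[R] Q) : map f (-g) = -map f g := by
  ext; simp [tmul_neg]

section

variable (β : L →ₗ[k] L →ₗ[k] L) (α : L →ₗ[k] L)

noncomputable def adrLeft : L ⊗[k] L →ₗ[k] L →ₗ[k] L ⊗[k] L :=
  ((TensorProduct.mapBilinear (RingHom.id k) L L L L).flip α ∘ₗ β).flip

noncomputable def adrRight : L ⊗[k] L →ₗ[k] L →ₗ[k] L ⊗[k] L :=
  (TensorProduct.mapBilinear (RingHom.id k) L L L L α ∘ₗ β).flip

@[simp] lemma adrLeft_apply (r : L ⊗[k] L) (x : L) :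
    adrLeft β α r x = map (β x) α r := rfl

@[simp] lemma adrRight_apply (r : L ⊗[k] L) (x : L) :
    adrRight β α r x = map α (β x) r := rfl

variable {β α}

lemma adr_eq_adrLeft_add_adrRight (r : L ⊗[k] L) :
    adr β α r = adrLeft β α r + adrRight β α r := rfl

@[simp] lemma adr_apply (r : L ⊗[k] L) (x : L) : adr β α r x = adT2 β α x r := rfl

@[simp] lemma cyc_tmul (u v w : L) : cyc (u ⊗ₜ[k] (v ⊗ₜ[k] w)) = w ⊗ₜ[k] (u ⊗ₜ[k] v) := by
  simp [cyc]

@[simp] lemma cycSum_tmul (u v w : L) :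
    cycSum (u ⊗ₜ[k] (v ⊗ₜ[k] w))
      = u ⊗ₜ (v ⊗ₜ w) + w ⊗ₜ (u ⊗ₜ v) + v ⊗ₜ (w ⊗ₜ u) := by
  simp [cycSum]

@[simp] lemma adT2_tmul (x a b : L) :
    adT2 β α x (a ⊗ₜ b) = β x a ⊗ₜ α b + α a ⊗ₜ β x b := by
  simp [adT2]

@[simp] lemma adT3_tmul (x a : L) (w : L ⊗[k] L) :
    adT3 β α x (a ⊗ₜ w) = β x a ⊗ₜ map α α w + α a ⊗ₜ adT2 β α x w := by
  simp [adT3, adT2, tmul_add, add_assoc]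

@[simp] lemma chybe_tmul (a b c d : L) :
    chybe β α (a ⊗ₜ b) (c ⊗ₜ d)
      = β a c ⊗ₜ (α b ⊗ₜ α d) + α a ⊗ₜ (β b c ⊗ₜ α d) + α a ⊗ₜ (α c ⊗ₜ β b d) := by
  simp [chybe, c1213, c1223, c1323]

lemma comm_adT2 (x : L) (w : L ⊗[k] L) :
    TensorProduct.comm k L L (adT2 β α x w) = adT2 β α x (TensorProduct.comm k L L w) := by
  induction w using TensorProduct.induction_on with
  | zero => simp
  | tmul a b => simp [add_comm]
  | add w w' hw hw' => simp only [map_add, hw, hw']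

lemma map_adT2 (hmult : ∀ x y, α (β x y) = β (α x) (α y)) (x : L) (w : L ⊗[k] L) :
    map α α (adT2 β α x w) = adT2 β α (α x) (map α α w) := by
  induction w using TensorProduct.induction_on with
  | zero => simp
  | tmul a b => simp [hmult]
  | add w w' hw hw' => simp only [map_add, hw, hw']

lemma map_adT3 (hmult : ∀ x y, α (β x y) = β (α x) (α y)) (x : L) (w : L ⊗[k] (L ⊗[k] L)) :
    map α (map α α) (adT3 β α x w) = adT3 β α (α x) (map α (map α α) w) := by
  have h : map α (map α α) ∘ₗ adT3 β α x = adT3 β α (α x) ∘ₗ map α (map α α) := by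
    ext a b c
    simp [hmult]
  exact LinearMap.congr_fun h w

lemma cycSum_adT3 (x : L) (w : L ⊗[k] (L ⊗[k] L)) :
    cycSum (adT3 β α x w) = adT3 β α x (cycSum w) := by
  have h : cycSum ∘ₗ adT3 β α x = adT3 β α x ∘ₗ cycSum := by
    ext a b c
    simp only [AlgebraTensorModule.curry_apply, LinearMap.restrictScalars_self, curry_apply,
      LinearMap.coe_comp, Function.comp_apply, adT3_tmul, map_tmul, adT2_tmul, map_add,
      cycSum_tmul, tmul_add]
    abel
  exact LinearMap.congr_fun h w

lemma cycSum_map_map (w : L ⊗[k] (L ⊗[k] L)) :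
    cycSum (map α (map α α) w) = map α (map α α) (cycSum w) := by
  have h : cycSum ∘ₗ map α (map α α) = map α (map α α) ∘ₗ cycSum := by
    ext a b c
    simp
  exact LinearMap.congr_fun h w

lemma map_chybe (hmult : ∀ x y, α (β x y) = β (α x) (α y)) (r s : L ⊗[k] L) :
    map α (map α α) (chybe β α r s) = chybe β α (map α α r) (map α α s) := by
  have h : map α (map α α) ∘ₗ (c1213 β α + c1223 β α + c1323 β α)
      = (c1213 β α + c1223 β α + c1323 β α) ∘ₗ map (map α α) (map α α) := by
    ext a b c d
    simp [c1213, c1223, c1323, hmult]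
  simpa [chybe] using LinearMap.congr_fun h (r ⊗ₜ s)

lemma hom_leibniz (hskew : ∀ x y, β x y = - β y x)
    (hjac : ∀ x y z, β (β x y) (α z) + β (β z x) (α y) + β (β y z) (α x) = 0) (x u v : L) :
    β (α x) (β u v) = β (β x u) (α v) + β (α u) (β x v) := by
  have h := hjac x u v
  rw [hskew (β u v), hskew v x, map_neg, LinearMap.neg_apply, hskew (β x v)] at h
  linear_combination (norm := module) -h

lemma adT2_bracket (hskew : ∀ x y, β x y = - β y x)
    (hmult : ∀ x y, α (β x y) = β (α x) (α y))
    (hjac : ∀ x y z, β (β x y) (α z) + β (β z x) (α y) + β (β y z) (α x) = 0)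
    (x y : L) (w : L ⊗[k] L) :
    adT2 β α (β x y) (map α α w)
      = adT2 β α (α x) (adT2 β α y w) - adT2 β α (α y) (adT2 β α x w) := by
  induction w using TensorProduct.induction_on with
  | zero => simp
  | tmul a b =>
    simp only [map_tmul, adT2_tmul, map_add, hom_leibniz hskew hjac x y, add_tmul, hmult, tmul_add]
    abel
  | add w w' hw hw' => simp only [map_add, hw, hw']; abel

lemma map_map_Δ {Δ : L →ₗ[k] L ⊗[k] L} (hcomul : ∀ x, Δ (α x) = map α α (Δ x))
    (w : L ⊗[k] L) :
    map α (map α α) (map α Δ w) = map α Δ (map α α w) := by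
  induction w using TensorProduct.induction_on with
  | zero => simp
  | tmul a b => simp [hcomul]
  | add w w' hw hw' => simp only [map_add, hw, hw']

lemma map_Δ_adT2 {Δ : L →ₗ[k] L ⊗[k] L} (hmult : ∀ x y, α (β x y) = β (α x) (α y))
    (hcomul : ∀ x, Δ (α x) = map α α (Δ x))
    (hcompat : ∀ x y, Δ (β x y) = adT2 β α (α x) (Δ y) - adT2 β α (α y) (Δ x))
    (x : L) (w : L ⊗[k] L) :
    map α Δ (adT2 β α x w)
      = adT3 β α (α x) (map α Δ w) - map (α ∘ₗ α) (adr β α (Δ x) ∘ₗ α) w := by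
  induction w using TensorProduct.induction_on with
  | zero => simp
  | tmul a b =>
    simp only [adT2_tmul, map_add, map_tmul, hmult, hcomul, hcompat, tmul_sub, adT3_tmul,
      LinearMap.coe_comp, Function.comp_apply, adr_apply]
    abel
  | add w w' hw hw' => simp only [map_add, hw, hw']; abel

/- For antisymmetric `u`, `s` this says that `↻ (α ⊗ ad((α ⊗ α) s)) u = ↻ (α² ⊗ ad(u) α) s`: both
sides carry the same terms, up to a cyclic rotation and the antisymmetry of the bracket. -/
lemma cycSum_map_adr_map (hskew : ∀ x y, β x y = - β y x) (u s : L ⊗[k] L) :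
    cycSum (map α (adr β α (map α α s)) u)
      = - cycSum (map (α ∘ₗ α) (adrRight β α u ∘ₗ α) (TensorProduct.comm k L L s))
        - cycSum (map (α ∘ₗ α) (adrLeft β α (TensorProduct.comm k L L u) ∘ₗ α) s) := by
  simp only [adr_eq_adrLeft_add_adrRight]
  induction u using TensorProduct.induction_on with
  | zero => simp
  | add u u' hu hu' =>
    simp only [map_add, LinearMap.add_apply, LinearMap.add_comp, map_add_right] at hu hu' ⊢
    linear_combination (norm := module) hu + hu'
  | tmul a b =>
    induction s using TensorProduct.induction_on with
    | zero => simp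
    | add s s' hs hs' =>
      simp only [map_add, LinearMap.add_apply, map_add_right] at hs hs' ⊢
      linear_combination (norm := module) hs + hs'
    | tmul c d =>
      simp only [map_tmul, LinearMap.add_apply, adrLeft_apply, hskew b (α c), neg_tmul,
        adrRight_apply, hskew b (α d), tmul_neg, tmul_add, map_add, map_neg, cycSum_tmul,
        neg_add_rev, comm_tmul, LinearMap.coe_comp, Function.comp_apply]
      abel

/- `τ` and `α ⊗ α` are placed so that at `r = s = t`, with `τ t = -t` and `(α ⊗ α) t = t`, the
right-hand side collapses to `↻ (α ⊗ ad(t)) (ad_x t)`. -/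
lemma adT3_chybe (hskew : ∀ x y, β x y = - β y x)
    (hmult : ∀ x y, α (β x y) = β (α x) (α y))
    (hjac : ∀ x y z, β (β x y) (α z) + β (β z x) (α y) + β (β y z) (α x) = 0)
    (x : L) (r s : L ⊗[k] L) :
    adT3 β α (α x) (chybe β α r s)
      = map α (adr β α (map α α s)) (adT2 β α x r)
        + cyc (map α (adrRight β α (map α α (TensorProduct.comm k L L s)))
            (adT2 β α x (TensorProduct.comm k L L r)))
        - cyc (cyc (map α (adr β α (map α α r))
            (adT2 β α x (TensorProduct.comm k L L s))))
        - cyc (map α (adrLeft β α (map α α (TensorProduct.comm k L L r)))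
            (adT2 β α x s)) := by
  simp only [adr_eq_adrLeft_add_adrRight]
  induction r using TensorProduct.induction_on with
  | zero => simp [chybe]
  | add r r' hr hr' =>
    simp only [chybe, map_add, add_tmul, LinearMap.add_apply, map_add_right] at hr hr' ⊢
    linear_combination (norm := module) hr + hr'
  | tmul a b =>
    induction s using TensorProduct.induction_on with
    | zero => simp [chybe]
    | add s s' hs hs' =>
      simp only [chybe, map_add, tmul_add, LinearMap.add_apply, map_add_right] at hs hs' ⊢
      linear_combination (norm := module) hs + hs'
    | tmul c d =>
      simp only [chybe_tmul, map_add, adT3_tmul, map_tmul, hmult, adT2_tmul, tmul_add,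
        LinearMap.add_apply, adrLeft_apply, adrRight_apply, comm_tmul, cyc_tmul]
      rw [hom_leibniz hskew hjac x a c, hom_leibniz hskew hjac x b c,
        hom_leibniz hskew hjac x b d, hskew (β x c) (α a), hskew (β x c) (α b),
        hskew (β x d) (α b), hskew (α c) (α a), hskew (α c) (α b), hskew (α d) (α b)]
      simp only [neg_tmul, tmul_neg, tmul_add, add_tmul]
      abel

lemma cycSum_map_adr_of_comm_eq_neg (hskew : ∀ x y, β x y = - β y x) {t u : L ⊗[k] L}
    (ht : map α α t = t) (hanti : TensorProduct.comm k L L t = - t)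
    (hu : TensorProduct.comm k L L u = - u) :
    cycSum (map α (adr β α t) u) = cycSum (map (α ∘ₗ α) (adr β α u ∘ₗ α) t) := by
  have h := cycSum_map_adr_map (α := α) hskew u t
  rw [ht, hanti, hu] at h
  rw [h, adr_eq_adrLeft_add_adrRight u]
  simp only [map_neg, neg_neg, LinearMap.neg_comp, map_neg_right, LinearMap.neg_apply,
    sub_neg_eq_add, LinearMap.add_comp, map_add_right, LinearMap.add_apply, map_add]
  abel

lemma cycSum_map_adr_adT2 (hskew : ∀ x y, β x y = - β y x)
    (hmult : ∀ x y, α (β x y) = β (α x) (α y))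
    (hjac : ∀ x y z, β (β x y) (α z) + β (β z x) (α y) + β (β y z) (α x) = 0)
    {t : L ⊗[k] L} (ht : map α α t = t) (hanti : TensorProduct.comm k L L t = - t)
    (x : L) :
    cycSum (map α (adr β α t) (adT2 β α x t)) = adT3 β α (α x) (chybe β α t t) := by
  rw [adT3_chybe hskew hmult hjac, ht, hanti]
  simp only [cycSum, adr_eq_adrLeft_add_adrRight, map_add_right, LinearMap.add_apply,
    LinearMap.id_coe, id_eq, map_add, LinearMap.coe_comp, Function.comp_apply, map_neg, ht,
    map_neg_right, LinearMap.neg_apply, neg_neg, sub_neg_eq_add]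
  abel

lemma map_chybe_add_cycSum {Δ : L →ₗ[k] L ⊗[k] L} (hmult : ∀ x y, α (β x y) = β (α x) (α y))
    (hcomul : ∀ x, Δ (α x) = map α α (Δ x))
    {t : L ⊗[k] L} (ht : map α α t = t) :
    map α (map α α) (chybe β α t t + cycSum (map α Δ t))
      = chybe β α t t + cycSum (map α Δ t) := by
  rw [map_add, map_chybe hmult, ← cycSum_map_map, map_map_Δ hcomul, ht]

lemma cycSum_map_add_adr_eq_zero {Δ : L →ₗ[k] L ⊗[k] L} (hbi : IsHomLieBialg β Δ α) {t : L ⊗[k] L}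
    (ht : map α α t = t) (hanti : TensorProduct.comm k L L t = - t)
    (hpert : ∀ x : L, map α (map α α) (adT3 β α x (chybe β α t t + cycSum (map α Δ t))) = 0)
    (z : L) :
    cycSum (map α (Δ + adr β α t) ((Δ + adr β α t) z)) = 0 := by
  obtain ⟨⟨hskew, hmult, hjac⟩, ⟨hcomul, hcoanti, hcojac⟩, hcompat⟩ := hbi
  have hK := hpert z
  rw [map_adT3 hmult, map_chybe_add_cycSum hmult hcomul ht, map_add] at hK
  simp only [map_add_right, LinearMap.add_apply, adr_apply, map_add]
  rw [hcojac, map_Δ_adT2 hmult hcomul hcompat, map_sub, cycSum_adT3,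
    cycSum_map_adr_of_comm_eq_neg hskew ht hanti (hcoanti z),
    cycSum_map_adr_adT2 hskew hmult hjac ht hanti]
  linear_combination (norm := module) hK

theorem isHomLieCoalg_add_adr {Δ : L →ₗ[k] L ⊗[k] L} (hbi : IsHomLieBialg β Δ α) {t : L ⊗[k] L}
    (ht : map α α t = t) (hanti : TensorProduct.comm k L L t = - t)
    (hpert : ∀ x : L, map α (map α α) (adT3 β α x (chybe β α t t + cycSum (map α Δ t))) = 0) :
    IsHomLieCoalg (Δ + adr β α t) α := by
  refine ⟨fun z => ?_, fun z => ?_, cycSum_map_add_adr_eq_zero hbi ht hanti hpert⟩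
  all_goals obtain ⟨⟨-, hmult, -⟩, ⟨hcomul, hcoanti, -⟩, -⟩ := hbi
  · simp [hcomul, map_adT2 hmult, ht]
  · simp only [LinearMap.add_apply, adr_apply, map_add, hcoanti, comm_adT2, hanti, map_neg,
      neg_add_rev]
    abel

lemma add_adr_apply_bracket {Δ : L →ₗ[k] L ⊗[k] L} (hL : IsHomLie β α)
    (hcompat : ∀ x y, Δ (β x y) = adT2 β α (α x) (Δ y) - adT2 β α (α y) (Δ x))
    {t : L ⊗[k] L} (ht : map α α t = t) (x y : L) :
    (Δ + adr β α t) (β x y)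
      = adT2 β α (α x) ((Δ + adr β α t) y) - adT2 β α (α y) ((Δ + adr β α t) x) := by
  obtain ⟨hskew, hmult, hjac⟩ := hL
  have h := adT2_bracket hskew hmult hjac x y t
  rw [ht] at h
  simp only [LinearMap.add_apply, adr_apply, map_add, hcompat, h]
  abel

end

theorem stmt18_general {k : Type*} [Field k] {L : Type*} [AddCommGroup L] [Module k L]
    (β : L →ₗ[k] L →ₗ[k] L) (Δ : L →ₗ[k] L ⊗[k] L) (α : L →ₗ[k] L)
    (hbi : IsHomLieBialg β Δ α)
    (t : L ⊗[k] L)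
    (ht : TensorProduct.map α α t = t)
    (hanti : TensorProduct.comm k L L t = - t)
    (hpert : ∀ x : L,
      TensorProduct.map α (TensorProduct.map α α)
        (adT3 β α x (chybe β α t t + cycSum (TensorProduct.map α Δ t))) = 0) :
    IsHomLieBialg β (Δ + adr β α t) α :=
  ⟨hbi.1, isHomLieCoalg_add_adr hbi ht hanti hpert, add_adr_apply_bracket hbi.1 hbi.2.2 ht⟩

/-- perturbing the cobracket of a Hom-Lie bialgebra by `ad(t)` for a
suitable `t` yields another Hom-Lie bialgebra. -/
theorem stmt18 {k : Type*} [Field k] [CharZero k] {L : Type*} [AddCommGroup L] [Module k L]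
    (β : L →ₗ[k] L →ₗ[k] L) (Δ : L →ₗ[k] L ⊗[k] L) (α : L →ₗ[k] L)
    (hbi : IsHomLieBialg β Δ α)
    (t : L ⊗[k] L)
    (ht : TensorProduct.map α α t = t)
    (hanti : TensorProduct.comm k L L t = - t)
    (hpert : ∀ x : L,
      TensorProduct.map α (TensorProduct.map α α)
        (adT3 β α x (chybe β α t t + cycSum (TensorProduct.map α Δ t))) = 0) :
    IsHomLieBialg β (Δ + adr β α t) α :=
  stmt18_general β Δ α hbi t ht hanti hpert
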